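/- arXiv:math/0511060 — 3 statements merged into one kernel-verified Lean document; each statement's English description precedes it below -/
import Mathlib

section
/- For n = 5 there is no tuple of complex numbers b_i^{(k)} (2 ≤ k ≤ 3, 0 ≤ i ≤ 5-k) with b_i^{(n-2)} ≡ 1 satisfying both the recursion b_{i+1}^{(k)} = b_i^{(k+1)} + b_i^{(k)} and the quadratic relations b_{i+k}^{(n-k)} b_i^{(k)} - b_i^{(n-k)} b_{i+n-k}^{(k)} = 0 and b_{i+k-1}^{(n-k)} b_i^{(k-1)} - b_i^{(n-k)} b_{i+n-k}^{(k-1)} = 0 for all admissible i and k (with b^{(1)} the constant sequence 1). -/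
/-- For `n = 5` there is no family of complex numbers `b k i = bᵢ^{(k)}` with
`b 1 ≡ 1` (the coefficients of `Y₁`), `b 3 ≡ 1` (the coefficients of
`Y_{n-2} = Y₃`), satisfying the recursion `b k (i+1) = b (k+1) i + b k i` and
the quadratic relations coming from `[Y_{n-k}, Y_k] = 0` and
`[Y_{n-k}, Y_{k-1}] = 0` at all admissible indices. -/
theorem no_solution_n_five :
    ¬ ∃ b : ℕ → ℕ → ℂ,
      (∀ i, i ≤ 4 → b 1 i = 1) ∧
      (∀ i, i ≤ 2 → b 3 i = 1) ∧
      (∀ k i, 2 ≤ k → k ≤ 5 - 3 → i ≤ 5 - k - 1 →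
        b k (i + 1) = b (k + 1) i + b k i) ∧
      (∀ k i, 2 ≤ k → k ≤ 3 → i + k ≤ 5 - (5 - k) → i + (5 - k) ≤ 5 - k →
        b (5 - k) (i + k) * b k i - b (5 - k) i * b k (i + (5 - k)) = 0) ∧
      (∀ k i, 2 ≤ k → k ≤ 3 → i + (k - 1) ≤ 5 - (5 - k) →
        i + (5 - k) ≤ 5 - (k - 1) →
        b (5 - k) (i + (k - 1)) * b (k - 1) i
          - b (5 - k) i * b (k - 1) (i + (5 - k)) = 0) := by
  rintro ⟨b, h1, h3, hrec, hq1, hq2⟩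
  have r0 := hrec 2 0 (by norm_num) (by norm_num) (by norm_num)
  have r1 := hrec 2 1 (by norm_num) (by norm_num) (by norm_num)
  have r2 := hrec 2 2 (by norm_num) (by norm_num) (by norm_num)
  have q := hq1 2 0 (by norm_num) (by norm_num) (by norm_num) (by norm_num)
  norm_num at r0 r1 r2 q
  rw [h3 0 (by norm_num), h3 1 (by norm_num), h3 2 (by norm_num)] at *
  rw [r2, r1, r0] at q
  ring_nf at q
  simp at q
end

section
/- For n = 6, the unique pair (b_0^{(2)}, b_0^{(3)}) of complex numbers for which the system given by the recursion b_{i+1}^{(k)} = b_i^{(k+1)} + b_i^{(k)} (with b^{(1)} ≡ 1 and b^{(4)} ≡ 1 determined as the top sequence) and the commutation constraints [Y_{n-k},Y_k] = 0, [Y_{n-k},Y_{k-1}] = 0 (expressed as b_{i+k}^{(n-k)} b_i^{(k)} = b_i^{(n-k)} b_{i+n-k}^{(k)} and b_{i+k-1}^{(n-k)} b_i^{(k-1)} = b_i^{(n-k)} b_{i+n-k}^{(k-1)}) admits a solution is (9/8, -3/2). -/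
/-- The constraint system for `n = 6`: `b k i = bᵢ^{(k)}` are the coefficients
of the vector fields `Y_k` on `ℂ⁷`, with `Y₁` and `Y₄ = Y_{n-2}` having all
coefficients `1`, subject to the recursion `b k (i+1) = b (k+1) i + b k i`
(from `[Y₁, Y_k] = -Y_{k+1}`) and the quadratic relations from
`[Y_{6-k}, Y_k] = 0` and `[Y_{6-k}, Y_{k-1}] = 0`. -/
def SolSix (b : ℕ → ℕ → ℂ) : Prop :=
  (∀ i, i ≤ 5 → b 1 i = 1) ∧
  (∀ i, i ≤ 2 → b 4 i = 1) ∧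
  (∀ k i, 2 ≤ k → k ≤ 3 → i ≤ 6 - k - 1 →
    b k (i + 1) = b (k + 1) i + b k i) ∧
  (∀ k i, 2 ≤ k → k ≤ 4 → i + k ≤ 6 - (6 - k) → i + (6 - k) ≤ 6 - k →
    b (6 - k) (i + k) * b k i - b (6 - k) i * b k (i + (6 - k)) = 0) ∧
  (∀ k i, 2 ≤ k → k ≤ 4 → i + (k - 1) ≤ 6 - (6 - k) →
    i + (6 - k) ≤ 6 - (k - 1) →
    b (6 - k) (i + (k - 1)) * b (k - 1) i
      - b (6 - k) i * b (k - 1) (i + (6 - k)) = 0)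

/-- For `n = 6`, the unique pair `(b₀^{(2)}, b₀^{(3)})` for which the system
admits a solution is `(9/8, -3/2)`. -/
theorem unique_solution_n_six (c₂ c₃ : ℂ) :
    (∃ b : ℕ → ℕ → ℂ, SolSix b ∧ b 2 0 = c₂ ∧ b 3 0 = c₃)
      ↔ (c₂ = 9 / 8 ∧ c₃ = -(3 / 2)) := by
  constructor
  · rintro ⟨b, ⟨h1, h4, hrec, hq1, hq2⟩, hc2, hc3⟩
    have h40 : b 4 0 = 1 := h4 0 (by norm_num)
    have h41 : b 4 1 = 1 := h4 1 (by norm_num)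
    have h42 : b 4 2 = 1 := h4 2 (by norm_num)
    have h31 : b 3 1 = b 4 0 + b 3 0 := hrec 3 0 (by norm_num) (by norm_num) (by norm_num)
    have h32 : b 3 2 = b 4 1 + b 3 1 := hrec 3 1 (by norm_num) (by norm_num) (by norm_num)
    have h33 : b 3 3 = b 4 2 + b 3 2 := hrec 3 2 (by norm_num) (by norm_num) (by norm_num)
    have h21 : b 2 1 = b 3 0 + b 2 0 := hrec 2 0 (by norm_num) (by norm_num) (by norm_num)
    have h22 : b 2 2 = b 3 1 + b 2 1 := hrec 2 1 (by norm_num) (by norm_num) (by norm_num)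
    have h23 : b 2 3 = b 3 2 + b 2 2 := hrec 2 2 (by norm_num) (by norm_num) (by norm_num)
    have h24 : b 2 4 = b 3 3 + b 2 3 := hrec 2 3 (by norm_num) (by norm_num) (by norm_num)
    have e1 := hq1 2 0 (by norm_num) (by norm_num) (by norm_num) (by norm_num)
    have e2 := hq2 3 0 (by norm_num) (by norm_num) (by norm_num) (by norm_num)
    norm_num at e1 e2
    rw [h40] at h31
    rw [h41] at h32
    rw [h42] at h33
    rw [h40, h42] at e1
    -- derive c₃
    have hc3' : c₃ = -(3 / 2) := by
      linear_combination (-1/4) * (e1 + h24 + h23 + h22 + h21 + h33 + 2 * h32 + 3 * h31) - hc3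
    -- explicit values
    have v30 : b 3 0 = -(3 / 2) := hc3 ▸ hc3'
    have v32 : b 3 2 = 1 / 2 := by linear_combination h32 + h31 + v30
    have v23 : b 2 3 = c₂ - 3 / 2 := by
      linear_combination h23 + h22 + h21 + h32 + 2 * h31 + 3 * v30 + hc2
    rw [v30, v32, v23, hc2] at e2
    refine ⟨?_, hc3'⟩
    linear_combination (1/2) * e2
  · rintro ⟨rfl, rfl⟩
    refine ⟨fun k i => if k = 1 then 1 else if k = 2 then
        9/8 - 3/2 * (i : ℂ) + (i : ℂ) * ((i : ℂ) - 1) / 2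
      else if k = 3 then (i : ℂ) - 3/2 else 1, ⟨?_, ?_, ?_, ?_, ?_⟩, by norm_num, by norm_num⟩
    · intro i hi; norm_num
    · intro i hi; norm_num
    · intro k i hk hk' hi
      interval_cases k <;> (have hib : i ≤ 3 := by omega) <;> interval_cases i <;>
        first | omega | (norm_num <;> try ring)
    · intro k i hk hk' hi hi'
      interval_cases k <;> (have hib : i ≤ 1 := by omega) <;> interval_cases i <;>
        first | omega | norm_num
    · intro k i hk hk' hi hi'
      interval_cases k <;> (have hib : i ≤ 1 := by omega) <;> interval_cases i <;>
        first | omega | norm_num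
end

section
/- Let ω be a homogeneous 1-form on C^{n+1} annihilated by the Euler vector field R, and let η be another homogeneous 1-form with i_R η = 0 and of the same degree. Then the integrability-deformation equation ω ∧ dη + η ∧ dω = 0 holds if and only if dω ∧ dη = 0. -/
/-- Pointwise evaluation of the exterior derivative of a 1-form on `ℂ^(n+1)`. -/
noncomputable def d1 {n : ℕ} (ω : (Fin (n+1) → ℂ) → ((Fin (n+1) → ℂ) →L[ℂ] ℂ))
    (x a b : Fin (n+1) → ℂ) : ℂ :=
  fderiv ℂ (fun y => ω y b) x a - fderiv ℂ (fun y => ω y a) x b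

/-- First directional derivative of the coefficient `y ↦ F y a` in direction `u`. -/
noncomputable def Df {n : ℕ} (F : (Fin (n+1) → ℂ) → ((Fin (n+1) → ℂ) →L[ℂ] ℂ))
    (x u a : Fin (n+1) → ℂ) : ℂ :=
  fderiv ℂ (fun y => F y a) x u

/-- Second directional derivative. -/
noncomputable def DDf {n : ℕ} (F : (Fin (n+1) → ℂ) → ((Fin (n+1) → ℂ) →L[ℂ] ℂ))
    (x u v a : Fin (n+1) → ℂ) : ℂ :=
  fderiv ℂ (fun z => Df F z u a) x v

lemma d1_eq {n : ℕ} (F : (Fin (n+1) → ℂ) → ((Fin (n+1) → ℂ) →L[ℂ] ℂ))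
    (x a b : Fin (n+1) → ℂ) : d1 F x a b = Df F x a b - Df F x b a := rfl

lemma Df_contDiff {n : ℕ} (F : (Fin (n+1) → ℂ) → ((Fin (n+1) → ℂ) →L[ℂ] ℂ))
    (hsm : ∀ a, ContDiff ℂ ⊤ fun y => F y a) (u a : Fin (n+1) → ℂ) :
    ContDiff ℂ ⊤ (fun x => Df F x u a) :=
  ((hsm a).fderiv_right (m := ⊤) le_top).clm_apply contDiff_const

lemma DDf_eq {n : ℕ} (F : (Fin (n+1) → ℂ) → ((Fin (n+1) → ℂ) →L[ℂ] ℂ))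
    (hsm : ∀ a, ContDiff ℂ ⊤ fun y => F y a) (x u v a : Fin (n+1) → ℂ) :
    DDf F x u v a = fderiv ℂ (fderiv ℂ (fun y => F y a)) x v u := by
  have hc : DifferentiableAt ℂ (fderiv ℂ (fun y => F y a)) x :=
    (((hsm a).fderiv_right (m := ⊤) le_top).differentiable (by simp)) x
  have h := fderiv_clm_apply hc (differentiableAt_const u)
  show fderiv ℂ (fun z => (fderiv ℂ (fun y => F y a) z) u) x v = _
  rw [h]
  simp

lemma DDf_symm {n : ℕ} (F : (Fin (n+1) → ℂ) → ((Fin (n+1) → ℂ) →L[ℂ] ℂ))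
    (hsm : ∀ a, ContDiff ℂ ⊤ fun y => F y a) (x u v a : Fin (n+1) → ℂ) :
    DDf F x u v a = DDf F x v u a := by
  rw [DDf_eq F hsm, DDf_eq F hsm]
  exact ((hsm a).contDiffAt).isSymmSndFDerivAt le_top v u

lemma euler_deriv {n m : ℕ} (f : (Fin (n+1) → ℂ) → ℂ) (hf : ContDiff ℂ ⊤ f)
    (hh : ∀ (t : ℂ) x, f (t • x) = t ^ m * f x) (x : Fin (n+1) → ℂ) :
    fderiv ℂ f x x = (m : ℂ) * f x := by
  have hc : HasDerivAt (fun t : ℂ => t • x) x 1 := by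
    simpa using (hasDerivAt_id (1 : ℂ)).smul_const x
  have hfd : HasFDerivAt f (fderiv ℂ f x) ((fun t : ℂ => t • x) 1) := by
    simpa using ((hf.differentiable (by simp)) x).hasFDerivAt
  have h1 : HasDerivAt (fun t : ℂ => f (t • x)) (fderiv ℂ f x x) 1 :=
    hfd.comp_hasDerivAt 1 hc
  have h2 : HasDerivAt (fun t : ℂ => t ^ m * f x) ((m : ℂ) * f x) 1 := by
    simpa using (hasDerivAt_pow m (1 : ℂ)).mul_const (f x)
  have h3 : (fun t : ℂ => f (t • x)) = fun t : ℂ => t ^ m * f x :=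
    funext fun t => hh t x
  rw [h3] at h1
  exact h1.unique h2

lemma contract_deriv {n : ℕ} (ω : (Fin (n+1) → ℂ) → ((Fin (n+1) → ℂ) →L[ℂ] ℂ))
    (hsm : ∀ a, ContDiff ℂ ⊤ fun y => ω y a) (hR : ∀ x, ω x x = 0)
    (x b : Fin (n+1) → ℂ) :
    fderiv ℂ (fun y => ω y x) x b = - ω x b := by
  have hcurve : HasDerivAt (fun t : ℂ => x + t • b) b 0 := by
    simpa using ((hasDerivAt_id (0 : ℂ)).smul_const b).const_add x
  have k : ∀ a, HasDerivAt (fun t : ℂ => ω (x + t • b) a)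
      (fderiv ℂ (fun y => ω y a) x b) 0 := by
    intro a
    have hfd : HasFDerivAt (fun y => ω y a) (fderiv ℂ (fun y => ω y a) x)
        ((fun t : ℂ => x + t • b) 0) := by
      simpa using (((hsm a).differentiable (by simp)) x).hasFDerivAt
    exact hfd.comp_hasDerivAt 0 hcurve
  have h2 : HasDerivAt (fun t : ℂ => t * ω (x + t • b) b)
      ((1 : ℂ) * ω (x + (0 : ℂ) • b) b + (0 : ℂ) * fderiv ℂ (fun y => ω y b) x b) 0 :=
    (hasDerivAt_id (0 : ℂ)).mul (k b)
  have h3 : HasDerivAt (fun t : ℂ => ω (x + t • b) x + t * ω (x + t • b) b) _ 0 := (k x).add h2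
  have hz : (fun t : ℂ => ω (x + t • b) x + t * ω (x + t • b) b) = fun _ => (0 : ℂ) := by
    funext t
    have h4 := hR (x + t • b)
    have h5 : ω (x + t • b) (x + t • b) = ω (x + t • b) x + t * ω (x + t • b) b := by
      rw [map_add, map_smul, smul_eq_mul]
    rw [h5] at h4
    exact h4
  rw [hz] at h3
  have h6 := h3.unique (hasDerivAt_const 0 0)
  simp at h6
  linear_combination h6

lemma iR_d1 {n m : ℕ} (ω : (Fin (n+1) → ℂ) → ((Fin (n+1) → ℂ) →L[ℂ] ℂ))
    (hsm : ∀ a, ContDiff ℂ ⊤ fun y => ω y a)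
    (hhom : ∀ (t : ℂ) x a, ω (t • x) a = t ^ m * ω x a)
    (hR : ∀ x, ω x x = 0) (x b : Fin (n+1) → ℂ) :
    d1 ω x x b = ((m : ℂ) + 1) * ω x b := by
  show fderiv ℂ (fun y => ω y b) x x - fderiv ℂ (fun y => ω y x) x b = _
  rw [euler_deriv (fun y => ω y b) (hsm b) (fun t y => hhom t y b) x,
    contract_deriv ω hsm hR x b]
  ring

lemma expandA {n : ℕ} (ω η : (Fin (n+1) → ℂ) → ((Fin (n+1) → ℂ) →L[ℂ] ℂ))
    (hωsm : ∀ a, ContDiff ℂ ⊤ fun y => ω y a)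
    (hηsm : ∀ a, ContDiff ℂ ⊤ fun y => η y a)
    (x p q r t : Fin (n+1) → ℂ) :
    fderiv ℂ (fun z =>
      (ω z p * d1 η z q r - ω z q * d1 η z p r + ω z r * d1 η z p q)
        + (η z p * d1 ω z q r - η z q * d1 ω z p r + η z r * d1 ω z p q)) x t
    = (Df ω x t p * (Df η x q r - Df η x r q) + ω x p * (DDf η x q t r - DDf η x r t q))
    - (Df ω x t q * (Df η x p r - Df η x r p) + ω x q * (DDf η x p t r - DDf η x r t p))
    + (Df ω x t r * (Df η x p q - Df η x q p) + ω x r * (DDf η x p t q - DDf η x q t p))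
    + (Df η x t p * (Df ω x q r - Df ω x r q) + η x p * (DDf ω x q t r - DDf ω x r t q))
    - (Df η x t q * (Df ω x p r - Df ω x r p) + η x q * (DDf ω x p t r - DDf ω x r t p))
    + (Df η x t r * (Df ω x p q - Df ω x q p) + η x r * (DDf ω x p t q - DDf ω x q t p)) := by
  have Hω : ∀ a, HasFDerivAt (fun z => ω z a) (fderiv ℂ (fun z => ω z a) x) x :=
    fun a => (((hωsm a).differentiable (by simp)) x).hasFDerivAt
  have Hη : ∀ a, HasFDerivAt (fun z => η z a) (fderiv ℂ (fun z => η z a) x) x :=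
    fun a => (((hηsm a).differentiable (by simp)) x).hasFDerivAt
  have HDω : ∀ u a, HasFDerivAt (fun z => Df ω z u a) (fderiv ℂ (fun z => Df ω z u a) x) x :=
    fun u a => (((Df_contDiff ω hωsm u a).differentiable (by simp)) x).hasFDerivAt
  have HDη : ∀ u a, HasFDerivAt (fun z => Df η z u a) (fderiv ℂ (fun z => Df η z u a) x) x :=
    fun u a => (((Df_contDiff η hηsm u a).differentiable (by simp)) x).hasFDerivAt
  have Hd1ω : ∀ u v, HasFDerivAt (fun z => d1 ω z u v)
      (fderiv ℂ (fun z => Df ω z u v) x - fderiv ℂ (fun z => Df ω z v u) x) x :=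
    fun u v => (HDω u v).sub (HDω v u)
  have Hd1η : ∀ u v, HasFDerivAt (fun z => d1 η z u v)
      (fderiv ℂ (fun z => Df η z u v) x - fderiv ℂ (fun z => Df η z v u) x) x :=
    fun u v => (HDη u v).sub (HDη v u)
  have comb := (((((Hω p).mul (Hd1η q r)).sub ((Hω q).mul (Hd1η p r))).add
      ((Hω r).mul (Hd1η p q))).add
    ((((Hη p).mul (Hd1ω q r)).sub ((Hη q).mul (Hd1ω p r))).add
      ((Hη r).mul (Hd1ω p q))))
  have H2 : fderiv ℂ (fun z =>
      (ω z p * d1 η z q r - ω z q * d1 η z p r + ω z r * d1 η z p q)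
        + (η z p * d1 ω z q r - η z q * d1 ω z p r + η z r * d1 ω z p q)) x = _ := comb.fderiv
  rw [H2]
  simp only [ContinuousLinearMap.add_apply, ContinuousLinearMap.sub_apply,
    ContinuousLinearMap.smul_apply, smul_eq_mul, ContinuousLinearMap.coe_sub', Pi.sub_apply]
  simp only [DDf, Df, d1]
  ring

/-- For homogeneous 1-forms `ω, η` on `ℂ^(n+1)` of the same degree with
`i_R ω = i_R η = 0`, the deformation equation `ω ∧ dη + η ∧ dω = 0` holds if
and only if `dω ∧ dη = 0`. -/
theorem deformation_iff_dd {n m : ℕ}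
    (ω η : (Fin (n+1) → ℂ) → ((Fin (n+1) → ℂ) →L[ℂ] ℂ))
    (hωsm : ∀ a, ContDiff ℂ ⊤ fun y => ω y a)
    (hηsm : ∀ a, ContDiff ℂ ⊤ fun y => η y a)
    (hωhom : ∀ (t : ℂ) x a, ω (t • x) a = t ^ m * ω x a)
    (hηhom : ∀ (t : ℂ) x a, η (t • x) a = t ^ m * η x a)
    (hRω : ∀ x, ω x x = 0) (hRη : ∀ x, η x x = 0) :
    (∀ x a b c,
        (ω x a * d1 η x b c - ω x b * d1 η x a c + ω x c * d1 η x a b)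
          + (η x a * d1 ω x b c - η x b * d1 ω x a c + η x c * d1 ω x a b) = 0)
      ↔ (∀ x a b c d,
          d1 ω x a b * d1 η x c d - d1 ω x a c * d1 η x b d
            + d1 ω x a d * d1 η x b c + d1 ω x b c * d1 η x a d
            - d1 ω x b d * d1 η x a c + d1 ω x c d * d1 η x a b = 0) := by
  constructor
  · intro hA x a b c d
    have E : ∀ p q r t : Fin (n+1) → ℂ,
        (Df ω x t p * (Df η x q r - Df η x r q) + ω x p * (DDf η x q t r - DDf η x r t q))
        - (Df ω x t q * (Df η x p r - Df η x r p) + ω x q * (DDf η x p t r - DDf η x r t p))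
        + (Df ω x t r * (Df η x p q - Df η x q p) + ω x r * (DDf η x p t q - DDf η x q t p))
        + (Df η x t p * (Df ω x q r - Df ω x r q) + η x p * (DDf ω x q t r - DDf ω x r t q))
        - (Df η x t q * (Df ω x p r - Df ω x r p) + η x q * (DDf ω x p t r - DDf ω x r t p))
        + (Df η x t r * (Df ω x p q - Df ω x q p) + η x r * (DDf ω x p t q - DDf ω x q t p))
          = 0 := by
      intro p q r t
      rw [← expandA ω η hωsm hηsm x p q r t]
      have hzero : (fun z =>
          (ω z p * d1 η z q r - ω z q * d1 η z p r + ω z r * d1 η z p q)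
            + (η z p * d1 ω z q r - η z q * d1 ω z p r + η z r * d1 ω z p q))
          = fun _ => (0 : ℂ) := funext fun z => hA z p q r
      rw [hzero]
      simp
    have sW : ∀ u v e : Fin (n+1) → ℂ, DDf ω x u v e = DDf ω x v u e :=
      fun u v e => DDf_symm ω hωsm x u v e
    have sE : ∀ u v e : Fin (n+1) → ℂ, DDf η x u v e = DDf η x v u e :=
      fun u v e => DDf_symm η hηsm x u v e
    simp only [d1_eq]
    linear_combination
      (1/2 : ℂ) * E b c d a - (1/2 : ℂ) * E a c d b
        + (1/2 : ℂ) * E a b d c - (1/2 : ℂ) * E a b c d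
      - (1/2 : ℂ) * ω x d * sE b a c + (1/2 : ℂ) * ω x c * sE b a d
      + (1/2 : ℂ) * ω x d * sE c a b - (1/2 : ℂ) * ω x b * sE c a d
      - (1/2 : ℂ) * ω x d * sE c b a + (1/2 : ℂ) * ω x a * sE c b d
      - (1/2 : ℂ) * ω x c * sE d a b + (1/2 : ℂ) * ω x b * sE d a c
      + (1/2 : ℂ) * ω x c * sE d b a - (1/2 : ℂ) * ω x a * sE d b c
      - (1/2 : ℂ) * ω x b * sE d c a + (1/2 : ℂ) * ω x a * sE d c b
      - (1/2 : ℂ) * η x d * sW b a c + (1/2 : ℂ) * η x c * sW b a d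
      + (1/2 : ℂ) * η x d * sW c a b - (1/2 : ℂ) * η x b * sW c a d
      - (1/2 : ℂ) * η x d * sW c b a + (1/2 : ℂ) * η x a * sW c b d
      - (1/2 : ℂ) * η x c * sW d a b + (1/2 : ℂ) * η x b * sW d a c
      + (1/2 : ℂ) * η x c * sW d b a - (1/2 : ℂ) * η x a * sW d b c
      - (1/2 : ℂ) * η x b * sW d c a + (1/2 : ℂ) * η x a * sW d c b
  · intro hB x a b c
    have h := hB x x a b c
    rw [iR_d1 ω hωsm hωhom hRω x a, iR_d1 ω hωsm hωhom hRω x b,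
      iR_d1 ω hωsm hωhom hRω x c, iR_d1 η hηsm hηhom hRη x a,
      iR_d1 η hηsm hηhom hRη x b, iR_d1 η hηsm hηhom hRη x c] at h
    have hm : ((m : ℂ) + 1) ≠ 0 := by
      have : ((m + 1 : ℕ) : ℂ) ≠ 0 := Nat.cast_ne_zero.mpr (Nat.succ_ne_zero m)
      push_cast at this
      exact this
    have key : ((m : ℂ) + 1) *
        ((ω x a * d1 η x b c - ω x b * d1 η x a c + ω x c * d1 η x a b)
          + (η x a * d1 ω x b c - η x b * d1 ω x a c + η x c * d1 ω x a b)) = 0 := by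
      linear_combination h
    exact (mul_eq_zero.mp key).resolve_left hm
end
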